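/- (Lemma on bilinear multiplier tensors) Let d ≥ 1, ω ∈ ℝ, and let Φ ∈ C^∞(ℝ^d × ℝ^d; ℂ) satisfy: for all multi-indices α, β ∈ (ℕ∪{0})^d there exists C_{α,β} > 0 such that |∂_x^α ∂_y^β Φ(x,y)| ≤ C_{α,β} ⟨|x|+|y|⟩^{ω−|α|−|β|} for all x, y ∈ ℝ^d. Define the tensor Θ_Φ(j,k,ℓ) := Φ(k,ℓ) if j = k + ℓ and Θ_Φ(j,k,ℓ) := 0 otherwise. Then Θ_Φ ∈ BT^{ω+2N, N}(ℤ^d) for every N ∈ ℕ. -/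

import Mathlib

open scoped ENNReal NNReal BigOperators

noncomputable section

/-- The integer lattice `ℤ^d`. -/
abbrev Zd (d : ℕ) := Fin d → ℤ

/-- Euclidean norm `|j|` of an integer vector `j ∈ ℤ^d`. -/
def znorm {d : ℕ} (j : Zd d) : ℝ := Real.sqrt (∑ i, ((j i : ℝ)) ^ 2)

/-- Euclidean norm of a real vector. -/
def rnorm {d : ℕ} (x : Fin d → ℝ) : ℝ := Real.sqrt (∑ i, (x i) ^ 2)

/-- Japanese bracket `⟨x⟩ = (1 + x²)^{1/2}`. -/
def jb (x : ℝ) : ℝ := Real.sqrt (1 + x ^ 2)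

/-- The discrete bilinear operator `𝒯_Θ` (named `Tbil` here) associated with an infinite tensor `Θ`:
`(𝒯_Θ(f,g))_j = Σ_k Σ_ℓ Θ(j,k,ℓ) f_k g_ℓ`. -/
def Tbil {d : ℕ} (Θ : Zd d → Zd d → Zd d → ℂ) (f g : Zd d → ℂ) : Zd d → ℂ :=
  fun j => ∑' k, ∑' l, Θ j k l * f k * g l

/-- `ℓ^p`-type norm (extended-real valued) of a family of nonnegative extended reals,
with the usual modification (supremum) when `p = ∞`. -/
def nestNorm {ι : Type*} (p : ℝ≥0∞) (F : ι → ℝ≥0∞) : ℝ≥0∞ :=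
  if p = ∞ then ⨆ i, F i else (∑' i, F i ^ p.toReal) ^ (1 / p.toReal)

/-- The weighted `ℓ^p_s(ℤ^d)` norm `(Σ_k ⟨k⟩^{sp} |f_k|^p)^{1/p}`. -/
def wlpNorm {d : ℕ} (p : ℝ≥0∞) (s : ℝ) (f : Zd d → ℂ) : ℝ≥0∞ :=
  nestNorm p fun k => ENNReal.ofReal (jb (znorm k) ^ s * ‖f k‖)

/-- The `ℓ^p(ℤ^d)` norm. -/
def lpNorm {d : ℕ} (p : ℝ≥0∞) (f : Zd d → ℂ) : ℝ≥0∞ :=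
  nestNorm p fun k => ENNReal.ofReal ‖f k‖

/-- The tensor norm `‖Θ‖_{ω,N} = sup_{j,k,ℓ} |Θ(j,k,ℓ)| ⟨|j−k|+|j−ℓ|⟩^{2N} /
(⟨|j|+|k|⟩^ω ⟨|j|+|ℓ|⟩^ω)`. -/
def tensorNorm {d : ℕ} (ω N : ℝ) (Θ : Zd d → Zd d → Zd d → ℂ) : ℝ≥0∞ :=
  ⨆ j, ⨆ k, ⨆ l, ENNReal.ofReal
    (‖Θ j k l‖ * jb (znorm (j - k) + znorm (j - l)) ^ (2 * N) /
      (jb (znorm j + znorm k) ^ ω * jb (znorm j + znorm l) ^ ω))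

/-- The tensor norm `‖Θ‖_{ω₁,ω₂,N}`. -/
def tensorNorm2 {d : ℕ} (ω₁ ω₂ N : ℝ) (Θ : Zd d → Zd d → Zd d → ℂ) : ℝ≥0∞ :=
  ⨆ j, ⨆ k, ⨆ l, ENNReal.ofReal
    (‖Θ j k l‖ * jb (znorm (j - k) + znorm (j - l)) ^ (2 * N) /
      (jb (znorm j + znorm k) ^ ω₁ * jb (znorm j + znorm l) ^ ω₂))

/-- The tensor norm `‖Θ‖_{0,0,ω,N} = sup_{j,k,ℓ} |Θ(j,k,ℓ)| ⟨|j−k|+|j−ℓ|⟩^{2N} /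
⟨|j|+|k|+|ℓ|⟩^ω`. -/
def tensorNorm00 {d : ℕ} (ω N : ℝ) (Θ : Zd d → Zd d → Zd d → ℂ) : ℝ≥0∞ :=
  ⨆ j, ⨆ k, ⨆ l, ENNReal.ofReal
    (‖Θ j k l‖ * jb (znorm (j - k) + znorm (j - l)) ^ (2 * N) /
      jb (znorm j + znorm k + znorm l) ^ ω)

/-- The first bilinear commutator `[𝒯_Θ, b]₁(f,g) = 𝒯_Θ(bf, g) − b·𝒯_Θ(f,g)`. -/
def comm1 {d : ℕ} (Θ : Zd d → Zd d → Zd d → ℂ) (b f g : Zd d → ℂ) : Zd d → ℂ :=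
  fun j => Tbil Θ (fun k => b k * f k) g j - b j * Tbil Θ f g j

/-- The second bilinear commutator `[𝒯_Θ, b]₂(f,g) = 𝒯_Θ(f, bg) − b·𝒯_Θ(f,g)`. -/
def comm2 {d : ℕ} (Θ : Zd d → Zd d → Zd d → ℂ) (b f g : Zd d → ℂ) : Zd d → ℂ :=
  fun j => Tbil Θ f (fun l => b l * g l) j - b j * Tbil Θ f g j

/-- One-step finite difference in the variables `(j,k)`, with shift `v ∈ ℤ^d`:
`(D2 v Θ)(j,k,ℓ) = Θ(j+v, k+v, ℓ) − Θ(j,k,ℓ)`. -/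
def D2 {d : ℕ} (v : Zd d) (Θ : Zd d → Zd d → Zd d → ℂ) : Zd d → Zd d → Zd d → ℂ :=
  fun j k l => Θ (j + v) (k + v) l - Θ j k l

/-- One-step finite difference in the variables `(j,ℓ)`, with shift `v ∈ ℤ^d`:
`(D3 v Θ)(j,k,ℓ) = Θ(j+v, k, ℓ+v) − Θ(j,k,ℓ)`. -/
def D3 {d : ℕ} (v : Zd d) (Θ : Zd d → Zd d → Zd d → ℂ) : Zd d → Zd d → Zd d → ℂ :=
  fun j k l => Θ (j + v) k (l + v) - Θ j k l

/-- The iterated partial finite difference operator `Δ₂^α` for `α ∈ ℤ^d`: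
in direction `m`, `Δ_{2,m}^t = (Δ₂^{m, sign t})^{|t|}`. -/
def Delta2 {d : ℕ} (α : Zd d) (Θ : Zd d → Zd d → Zd d → ℂ) : Zd d → Zd d → Zd d → ℂ :=
  (List.finRange d).foldr
    (fun m F => (D2 (Pi.single m (Int.sign (α m))))^[(α m).natAbs] ∘ F) id Θ

/-- The iterated partial finite difference operator `Δ₃^β` for `β ∈ ℤ^d`. -/
def Delta3 {d : ℕ} (β : Zd d) (Θ : Zd d → Zd d → Zd d → ℂ) : Zd d → Zd d → Zd d → ℂ :=
  (List.finRange d).foldr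
    (fun m F => (D3 (Pi.single m (Int.sign (β m))))^[(β m).natAbs] ∘ F) id Θ

/-- `|α| = Σ_m |α_m|` for `α ∈ ℤ^d`. -/
def l1norm {d : ℕ} (α : Zd d) : ℝ := ∑ m, |(α m : ℝ)|

/-- The bilinear tensor class `BT^{ω,N}(ℤ^d)`:
`|Δ₂^α Δ₃^β Θ(j,k,ℓ)| ≤ C_{N,α,β} ⟨|j|+|k|+|ℓ|⟩^{ω−|α|−|β|} ⟨|j−k|+|j−ℓ|⟩^{−2N}`. -/
def BT {d : ℕ} (ω : ℝ) (N : ℕ) (Θ : Zd d → Zd d → Zd d → ℂ) : Prop :=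
  ∀ α β : Zd d, ∃ C : ℝ, 0 < C ∧ ∀ j k l : Zd d,
    ‖Delta2 α (Delta3 β Θ) j k l‖ ≤
      C * jb (znorm j + znorm k + znorm l) ^ (ω - l1norm α - l1norm β) *
        jb (znorm (j - k) + znorm (j - l)) ^ (-(2 * (N : ℝ)))

/-- The bilinear tensor class of order zero, `BT^0(ℤ^d) = ∪_{N > d} BT^{0,N}(ℤ^d)`. -/
def BT0 {d : ℕ} (Θ : Zd d → Zd d → Zd d → ℂ) : Prop :=
  ∃ N : ℕ, d < N ∧ BT 0 N Θ

/-- Directional derivative of a function on `ℝ^d × ℝ^d` in the direction `v`. -/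
def pDeriv {d : ℕ} (v : (Fin d → ℝ) × (Fin d → ℝ))
    (F : (Fin d → ℝ) × (Fin d → ℝ) → ℂ) : (Fin d → ℝ) × (Fin d → ℝ) → ℂ :=
  fun p => fderiv ℝ F p v

/-- Iterated partial derivative `∂_x^α` in the first group of variables. -/
def pdx {d : ℕ} (α : Fin d → ℕ) :
    ((Fin d → ℝ) × (Fin d → ℝ) → ℂ) → (Fin d → ℝ) × (Fin d → ℝ) → ℂ :=
  (List.finRange d).foldr (fun m G => (pDeriv (Pi.single m 1, 0))^[α m] ∘ G) id

/-- Iterated partial derivative `∂_y^β` in the second group of variables. -/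
def pdy {d : ℕ} (β : Fin d → ℕ) :
    ((Fin d → ℝ) × (Fin d → ℝ) → ℂ) → (Fin d → ℝ) × (Fin d → ℝ) → ℂ :=
  (List.finRange d).foldr (fun m G => (pDeriv (0, Pi.single m 1))^[β m] ∘ G) id

-- ===== auxiliary development for stmt_16 =====

namespace Stmt16Aux

variable {d : ℕ}

/-- The ambient space `ℝ^d × ℝ^d`. -/
abbrev EE (d : ℕ) := (Fin d → ℝ) × (Fin d → ℝ)

/-- continuous forward difference -/
def ddc (v : EE d) (F : EE d → ℂ) : EE d → ℂ := fun p => F (p + v) - F p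

def DifL (l : List (ℝ × EE d)) (F : EE d → ℂ) : EE d → ℂ :=
  l.foldr (fun a G => ddc (a.1 • a.2) G) F

def DerL (l : List (ℝ × EE d)) (F : EE d → ℂ) : EE d → ℂ :=
  l.foldr (fun a G => pDeriv a.2 G) F

lemma contDiff_ddc (v : EE d) {F : EE d → ℂ} (hF : ContDiff ℝ (⊤ : ℕ∞) F) :
    ContDiff ℝ (⊤ : ℕ∞) (ddc v F) :=
  (hF.comp (contDiff_id.add contDiff_const)).sub hF

lemma contDiff_pDeriv (v : EE d) {F : EE d → ℂ} (hF : ContDiff ℝ (⊤ : ℕ∞) F) :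
    ContDiff ℝ (⊤ : ℕ∞) (pDeriv v F) := by
  have h1 : ContDiff ℝ (⊤ : ℕ∞) (fderiv ℝ F) := hF.fderiv_right (by simp)
  exact (ContinuousLinearMap.apply ℝ ℂ v).contDiff.comp h1

lemma contDiff_DifL (l : List (ℝ × EE d)) {F : EE d → ℂ} (hF : ContDiff ℝ (⊤ : ℕ∞) F) :
    ContDiff ℝ (⊤ : ℕ∞) (DifL l F) := by
  induction l with
  | nil => exact hF
  | cons a t ih => exact contDiff_ddc _ ih

lemma fderiv_translate {F : EE d → ℂ} (hF : ContDiff ℝ (⊤ : ℕ∞) F) (v p : EE d) :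
    fderiv ℝ (fun q => F (q + v)) p = fderiv ℝ F (p + v) := by
  have hdF := hF.differentiable (by simp)
  have h : HasFDerivAt (fun q : EE d => F (q + v)) (fderiv ℝ F (p + v)) p := by
    have := (hdF (p + v)).hasFDerivAt.comp p ((hasFDerivAt_id p).add_const v)
    exact this
  exact h.fderiv

lemma pDeriv_ddc {F : EE d → ℂ} (hF : ContDiff ℝ (⊤ : ℕ∞) F) (w v : EE d) :
    pDeriv w (ddc v F) = ddc v (pDeriv w F) := by
  funext p
  have hdF := hF.differentiable (by simp)
  have h1 : DifferentiableAt ℝ (fun q : EE d => F (q + v)) p :=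
    ((hdF (p + v)).comp p ((differentiable_id.add_const v) p))
  show fderiv ℝ (fun q => F (q + v) - F q) p w = _
  rw [fderiv_fun_sub h1 (hdF p)]
  simp [pDeriv, ddc, fderiv_translate hF v p]

lemma ddc_comm (v w : EE d) (F : EE d → ℂ) : ddc v (ddc w F) = ddc w (ddc v F) := by
  funext p
  simp only [ddc]
  rw [add_right_comm p v w]
  ring

lemma DifL_ddc (l : List (ℝ × EE d)) (v : EE d) (F : EE d → ℂ) :
    DifL l (ddc v F) = ddc v (DifL l F) := by
  induction l with
  | nil => rfl
  | cons a t ih =>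
    show ddc _ (DifL t (ddc v F)) = _
    rw [ih, ddc_comm]
    rfl

lemma DifL_append (l₁ l₂ : List (ℝ × EE d)) (F : EE d → ℂ) :
    DifL (l₁ ++ l₂) F = DifL l₁ (DifL l₂ F) :=
  List.foldr_append

lemma DerL_append (l₁ l₂ : List (ℝ × EE d)) (F : EE d → ℂ) :
    DerL (l₁ ++ l₂) F = DerL l₁ (DerL l₂ F) :=
  List.foldr_append

lemma DifL_reverse (l : List (ℝ × EE d)) (F : EE d → ℂ) :
    DifL l.reverse F = DifL l F := by
  induction l generalizing F with
  | nil => rfl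
  | cons a t ih =>
    rw [List.reverse_cons, DifL_append]
    show DifL t.reverse (ddc (a.1 • a.2) F) = ddc (a.1 • a.2) (DifL t F)
    rw [ih, DifL_ddc]

lemma pDeriv_DifL (l : List (ℝ × EE d)) {F : EE d → ℂ} (hF : ContDiff ℝ (⊤ : ℕ∞) F)
    (u : EE d) : pDeriv u (DifL l F) = DifL l (pDeriv u F) := by
  induction l with
  | nil => rfl
  | cons a t ih =>
    show pDeriv u (ddc (a.1 • a.2) (DifL t F)) = ddc (a.1 • a.2) (DifL t (pDeriv u F))
    rw [pDeriv_ddc (contDiff_DifL t hF), ih]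

lemma mvt_step {G : EE d → ℂ} (hG : Differentiable ℝ G) (p v : EE d) {M : ℝ}
    (h : ∀ t : ℝ, t ∈ Set.Icc (0:ℝ) 1 → ‖fderiv ℝ G (p + t • v) v‖ ≤ M) :
    ‖G (p + v) - G p‖ ≤ M := by
  set g : ℝ → ℂ := fun t => G (p + t • v) with hg_def
  have hg : ∀ t : ℝ, HasDerivAt g (fderiv ℝ G (p + t • v) v) t := by
    intro t
    have h1 : HasDerivAt (fun t : ℝ => p + t • v) v t := by
      simpa using ((hasDerivAt_id t).smul_const v).const_add p
    exact (hG (p + t • v)).hasFDerivAt.comp_hasDerivAt t h1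
  have key := norm_image_sub_le_of_norm_deriv_le_segment (f := g) (a := 0) (b := 1) (C := M)
    (fun x _ => (hg x).differentiableAt.differentiableWithinAt)
    (fun x hx => by
      rw [((hg x).hasDerivWithinAt).derivWithin
        (uniqueDiffOn_Icc zero_lt_one x (Set.Ico_subset_Icc_self hx))]
      exact h x (Set.Ico_subset_Icc_self hx))
    1 (Set.mem_Icc.2 ⟨zero_le_one, le_refl 1⟩)
  simpa [hg_def] using key

/-- The main analytic claim: iterated finite differences are bounded by the
corresponding iterated directional derivatives near the base point. -/
lemma main_claim : ∀ (l : List (ℝ × EE d)),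
    (∀ a ∈ l, |a.1| ≤ 1 ∧ ‖a.2‖ ≤ 1) → ∀ F : EE d → ℂ, ContDiff ℝ (⊤ : ℕ∞) F →
    ∀ (p : EE d) (M : ℝ), 0 ≤ M →
    (∀ q : EE d, ‖q - p‖ ≤ (l.length : ℝ) → ‖DerL l.reverse F q‖ ≤ M) →
    ‖DifL l F p‖ ≤ M := by
  intro l
  induction l with
  | nil =>
    intro _ F hF p M hM h
    exact h p (by simp)
  | cons a t ih =>
    intro hmem F hF p M hM h
    obtain ⟨s, u⟩ := a
    have hs : |s| ≤ 1 := (hmem _ List.mem_cons_self).1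
    have hu : ‖u‖ ≤ 1 := (hmem _ List.mem_cons_self).2
    have hG : ContDiff ℝ (⊤ : ℕ∞) (DifL t F) := contDiff_DifL t hF
    have key : ∀ x : ℝ, x ∈ Set.Icc (0:ℝ) 1 →
        ‖fderiv ℝ (DifL t F) (p + x • ((s, u).1 • (s, u).2)) ((s, u).1 • (s, u).2)‖ ≤ M := by
      intro x hx
      set q₀ := p + x • (s • u) with hq₀
      have hq₀p : ‖q₀ - p‖ ≤ 1 := by
        rw [hq₀]
        rw [add_sub_cancel_left]
        rw [norm_smul, norm_smul]
        calc |x| * (|s| * ‖u‖) ≤ 1 * (1 * 1) := by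
              apply mul_le_mul (by rw [abs_of_nonneg hx.1]; exact hx.2)
                (mul_le_mul hs hu (norm_nonneg _) zero_le_one)
                (by positivity) zero_le_one
          _ = 1 := by norm_num
      have h1 : ‖fderiv ℝ (DifL t F) q₀ (s • u)‖ = |s| * ‖pDeriv u (DifL t F) q₀‖ := by
        rw [map_smul]
        simp [pDeriv, norm_smul]
      have h3 : ‖DifL t (pDeriv u F) q₀‖ ≤ M := by
        apply ih (fun b hb => hmem b (List.mem_cons_of_mem _ hb)) _
          (contDiff_pDeriv u hF) q₀ M hM
        intro r hr
        have hrw : DerL t.reverse (pDeriv u F) r = DerL ((s, u) :: t).reverse F r := by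
          rw [List.reverse_cons, DerL_append]
          rfl
        rw [hrw]
        apply h r
        have : r - p = (r - q₀) + (q₀ - p) := by abel
        calc ‖r - p‖ ≤ ‖r - q₀‖ + ‖q₀ - p‖ := by rw [this]; exact norm_add_le _ _
          _ ≤ (t.length : ℝ) + 1 := add_le_add hr hq₀p
          _ = (((s, u) :: t).length : ℝ) := by simp [add_comm]
      calc ‖fderiv ℝ (DifL t F) q₀ (s • u)‖ = |s| * ‖pDeriv u (DifL t F) q₀‖ := h1
        _ ≤ 1 * M := by
            apply mul_le_mul hs _ (norm_nonneg _) zero_le_one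
            rw [pDeriv_DifL t hF]
            exact h3
        _ = M := one_mul M
    have := mvt_step (hG.differentiable (by simp)) p ((s, u).1 • (s, u).2) key
    simpa [DifL, ddc] using this

end Stmt16Aux

namespace Stmt16Aux

variable {d : ℕ}

/-- embedding `ℤ^d → ℝ^d` -/
def emb (k : Zd d) : Fin d → ℝ := fun i => (k i : ℝ)

lemma emb_add (k v : Zd d) : emb (k + v) = emb k + emb v := by
  funext i; simp only [emb, Pi.add_apply, Int.cast_add]

/-- lift of a symbol to a tensor supported on `j = k + l` -/
def lift (Φ : EE d → ℂ) : Zd d → Zd d → Zd d → ℂ :=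
  fun j k l => if j = k + l then Φ (emb k, emb l) else 0

lemma D2_lift (v : Zd d) (Φ : EE d → ℂ) :
    D2 v (lift Φ) = lift (ddc (emb v, 0) Φ) := by
  funext j k l
  have hiff : j + v = (k + v) + l ↔ j = k + l := by
    rw [add_right_comm k v l]
    exact add_left_injective v |>.eq_iff
  by_cases hj : j = k + l
  · simp only [D2, lift, ddc, if_pos hj, if_pos (hiff.2 hj)]
    rw [emb_add]
    simp [Prod.mk_add_mk]
  · simp [D2, lift, ddc, hj, hiff.not.2 hj]

lemma D3_lift (v : Zd d) (Φ : EE d → ℂ) :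
    D3 v (lift Φ) = lift (ddc (0, emb v) Φ) := by
  funext j k l
  have hiff : j + v = k + (l + v) ↔ j = k + l := by
    rw [← add_assoc]
    exact add_left_injective v |>.eq_iff
  by_cases hj : j = k + l
  · simp only [D3, lift, ddc, if_pos hj, if_pos (hiff.2 hj)]
    rw [emb_add]
    simp [Prod.mk_add_mk]
  · simp [D3, lift, ddc, hj, hiff.not.2 hj]

lemma D2_iter_lift (v : Zd d) (n : ℕ) (Φ : EE d → ℂ) :
    (D2 v)^[n] (lift Φ) = lift ((ddc ((emb v, 0) : EE d))^[n] Φ) := by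
  induction n generalizing Φ with
  | zero => rfl
  | succ n ih =>
    rw [Function.iterate_succ_apply, Function.iterate_succ_apply, D2_lift, ih]

lemma D3_iter_lift (v : Zd d) (n : ℕ) (Φ : EE d → ℂ) :
    (D3 v)^[n] (lift Φ) = lift ((ddc ((0, emb v) : EE d))^[n] Φ) := by
  induction n generalizing Φ with
  | zero => rfl
  | succ n ih =>
    rw [Function.iterate_succ_apply, Function.iterate_succ_apply, D3_lift, ih]

/-- generic foldr / flatMap-replicate correspondence -/
lemma foldr_flatMap {X A : Type*} (op : X → A → A) (g : Fin d → X) (n : Fin d → ℕ) :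
    ∀ (l : List (Fin d)) (a : A),
      (l.foldr (fun m G => (op (g m))^[n m] ∘ G) id) a
        = ((l.flatMap fun m => List.replicate (n m) (g m)).foldr op a) := by
  have hrep : ∀ (x : X) (nn : ℕ) (a : A),
      (List.replicate nn x).foldr op a = (op x)^[nn] a := by
    intro x nn a
    induction nn with
    | zero => rfl
    | succ nn ih => rw [List.replicate_succ, List.foldr_cons, ih,
        Function.iterate_succ_apply']
  intro l
  induction l with
  | nil => intro a; rfl
  | cons m t ih =>
    intro a
    rw [List.flatMap_cons, List.foldr_append, ← ih a, hrep]
    rfl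

/-- the list of difference data associated to `Δ₂^α` -/
def L2 (α : Zd d) : List (ℝ × EE d) :=
  (List.finRange d).flatMap fun m => List.replicate (α m).natAbs
    (((Int.sign (α m) : ℝ)), ((Pi.single m 1 : Fin d → ℝ), (0 : Fin d → ℝ)))

def L3 (β : Zd d) : List (ℝ × EE d) :=
  (List.finRange d).flatMap fun m => List.replicate (β m).natAbs
    (((Int.sign (β m) : ℝ)), ((0 : Fin d → ℝ), (Pi.single m 1 : Fin d → ℝ)))

lemma smul_single_eq2 (m : Fin d) (z : ℤ) :
    ((z.sign : ℝ)) • (((Pi.single m 1 : Fin d → ℝ), (0 : Fin d → ℝ)) : EE d)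
      = ((emb (Pi.single m z.sign), 0) : EE d) := by
  apply Prod.ext
  · show (z.sign : ℝ) • (Pi.single m 1 : Fin d → ℝ) = emb (Pi.single m z.sign)
    funext i
    rcases eq_or_ne i m with h | h
    · subst h; simp [emb]
    · simp [emb, Pi.single_apply, h]
  · simp

lemma smul_single_eq3 (m : Fin d) (z : ℤ) :
    ((z.sign : ℝ)) • (((0 : Fin d → ℝ), (Pi.single m 1 : Fin d → ℝ)) : EE d)
      = ((0, emb (Pi.single m z.sign)) : EE d) := by
  apply Prod.ext
  · simp
  · show (z.sign : ℝ) • (Pi.single m 1 : Fin d → ℝ) = emb (Pi.single m z.sign)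
    funext i
    rcases eq_or_ne i m with h | h
    · subst h; simp [emb]
    · simp [emb, Pi.single_apply, h]

lemma Delta2_lift (α : Zd d) (Φ : EE d → ℂ) :
    Delta2 α (lift Φ) = lift (DifL (L2 α) Φ) := by
  unfold Delta2 L2 DifL
  rw [← foldr_flatMap (fun (a : ℝ × EE d) (G : EE d → ℂ) => ddc (a.1 • a.2) G)
    (fun m => (((Int.sign (α m) : ℝ)), ((Pi.single m 1 : Fin d → ℝ), (0 : Fin d → ℝ))))
    (fun m => (α m).natAbs) (List.finRange d) Φ]
  induction (List.finRange d) generalizing Φ with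
  | nil => rfl
  | cons m t ih =>
    simp only [List.foldr_cons, Function.comp_apply]
    rw [ih, D2_iter_lift]
    simp only [smul_single_eq2]

lemma Delta3_lift (β : Zd d) (Φ : EE d → ℂ) :
    Delta3 β (lift Φ) = lift (DifL (L3 β) Φ) := by
  unfold Delta3 L3 DifL
  rw [← foldr_flatMap (fun (a : ℝ × EE d) (G : EE d → ℂ) => ddc (a.1 • a.2) G)
    (fun m => (((Int.sign (β m) : ℝ)), ((0 : Fin d → ℝ), (Pi.single m 1 : Fin d → ℝ))))
    (fun m => (β m).natAbs) (List.finRange d) Φ]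
  induction (List.finRange d) generalizing Φ with
  | nil => rfl
  | cons m t ih =>
    simp only [List.foldr_cons, Function.comp_apply]
    rw [ih, D3_iter_lift]
    simp only [smul_single_eq3]

lemma DerL_L2 (α : Zd d) (Φ : EE d → ℂ) :
    DerL (L2 α) Φ = pdx (fun m => (α m).natAbs) Φ := by
  unfold DerL L2 pdx
  rw [← foldr_flatMap (fun (a : ℝ × EE d) (G : EE d → ℂ) => pDeriv a.2 G)
    (fun m => (((Int.sign (α m) : ℝ)), ((Pi.single m 1 : Fin d → ℝ), (0 : Fin d → ℝ))))
    (fun m => (α m).natAbs) (List.finRange d) Φ]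

lemma DerL_L3 (β : Zd d) (Φ : EE d → ℂ) :
    DerL (L3 β) Φ = pdy (fun m => (β m).natAbs) Φ := by
  unfold DerL L3 pdy
  rw [← foldr_flatMap (fun (a : ℝ × EE d) (G : EE d → ℂ) => pDeriv a.2 G)
    (fun m => (((Int.sign (β m) : ℝ)), ((0 : Fin d → ℝ), (Pi.single m 1 : Fin d → ℝ))))
    (fun m => (β m).natAbs) (List.finRange d) Φ]

lemma mem_L2 (α : Zd d) {a : ℝ × EE d} (ha : a ∈ L2 α) : |a.1| ≤ 1 ∧ ‖a.2‖ ≤ 1 := by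
  rw [L2, List.mem_flatMap] at ha
  obtain ⟨m, _, hm⟩ := ha
  have := List.eq_of_mem_replicate hm
  subst this
  constructor
  · show |((α m).sign : ℝ)| ≤ 1
    have : (α m).sign = -1 ∨ (α m).sign = 0 ∨ (α m).sign = 1 := by
      rcases lt_trichotomy (α m) 0 with h | h | h
      · left; exact Int.sign_eq_neg_one_of_neg h
      · right; left; rw [h]; rfl
      · right; right; exact Int.sign_eq_one_of_pos h
    rcases this with h | h | h <;> rw [h] <;> norm_num
  · show ‖(((Pi.single m 1 : Fin d → ℝ), (0 : Fin d → ℝ)) : EE d)‖ ≤ 1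
    rw [Prod.norm_def]
    apply max_le
    · rw [pi_norm_le_iff_of_nonneg zero_le_one]
      intro i
      rcases eq_or_ne i m with h | h
      · subst h; simp
      · simp [Pi.single_apply, h]
    · simp

lemma mem_L3 (β : Zd d) {a : ℝ × EE d} (ha : a ∈ L3 β) : |a.1| ≤ 1 ∧ ‖a.2‖ ≤ 1 := by
  rw [L3, List.mem_flatMap] at ha
  obtain ⟨m, _, hm⟩ := ha
  have := List.eq_of_mem_replicate hm
  subst this
  constructor
  · show |((β m).sign : ℝ)| ≤ 1
    have : (β m).sign = -1 ∨ (β m).sign = 0 ∨ (β m).sign = 1 := by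
      rcases lt_trichotomy (β m) 0 with h | h | h
      · left; exact Int.sign_eq_neg_one_of_neg h
      · right; left; rw [h]; rfl
      · right; right; exact Int.sign_eq_one_of_pos h
    rcases this with h | h | h <;> rw [h] <;> norm_num
  · show ‖(((0 : Fin d → ℝ), (Pi.single m 1 : Fin d → ℝ)) : EE d)‖ ≤ 1
    rw [Prod.norm_def]
    apply max_le
    · simp
    · rw [pi_norm_le_iff_of_nonneg zero_le_one]
      intro i
      rcases eq_or_ne i m with h | h
      · subst h; simp
      · simp [Pi.single_apply, h]

end Stmt16Aux

namespace Stmt16Aux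

variable {d : ℕ}

lemma rnorm_eq_norm (x : Fin d → ℝ) :
    rnorm x = ‖(WithLp.equiv 2 (Fin d → ℝ)).symm x‖ := by
  rw [EuclideanSpace.norm_eq]
  simp [rnorm, WithLp.equiv_symm_apply, PiLp.toLp_apply, Real.norm_eq_abs, sq_abs]

lemma rnorm_nonneg (x : Fin d → ℝ) : 0 ≤ rnorm x := Real.sqrt_nonneg _

lemma abs_rnorm_sub (x y : Fin d → ℝ) : |rnorm x - rnorm y| ≤ rnorm (x - y) := by
  rw [rnorm_eq_norm, rnorm_eq_norm, rnorm_eq_norm]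
  have : (WithLp.equiv 2 (Fin d → ℝ)).symm (x - y)
      = (WithLp.equiv 2 (Fin d → ℝ)).symm x - (WithLp.equiv 2 (Fin d → ℝ)).symm y := by
    rfl
  rw [this]
  exact abs_norm_sub_norm_le _ _

lemma rnorm_add_le (x y : Fin d → ℝ) : rnorm (x + y) ≤ rnorm x + rnorm y := by
  rw [rnorm_eq_norm, rnorm_eq_norm, rnorm_eq_norm,
    show (WithLp.equiv 2 (Fin d → ℝ)).symm (x + y) = (WithLp.equiv 2 (Fin d → ℝ)).symm x + (WithLp.equiv 2 (Fin d → ℝ)).symm y from rfl]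
  exact norm_add_le _ _

lemma rnorm_le_sqrtd_norm (w : Fin d → ℝ) : rnorm w ≤ Real.sqrt d * ‖w‖ := by
  have h1 : ∑ i, (w i) ^ 2 ≤ (d : ℝ) * ‖w‖ ^ 2 := by
    calc ∑ i, (w i) ^ 2 ≤ ∑ _i : Fin d, ‖w‖ ^ 2 := by
          apply Finset.sum_le_sum
          intro i _
          have := norm_le_pi_norm w i
          have h2 : |w i| ≤ ‖w‖ := by rwa [Real.norm_eq_abs] at this
          nlinarith [abs_nonneg (w i), neg_abs_le (w i), le_abs_self (w i)]
      _ = (d : ℝ) * ‖w‖ ^ 2 := by simp [Finset.sum_const, mul_comm]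
  calc rnorm w ≤ Real.sqrt ((d : ℝ) * ‖w‖ ^ 2) := Real.sqrt_le_sqrt h1
    _ = Real.sqrt d * ‖w‖ := by
        rw [Real.sqrt_mul (Nat.cast_nonneg d), Real.sqrt_sq (norm_nonneg w)]

lemma znorm_eq (k : Zd d) : znorm k = rnorm (emb k) := rfl

lemma emb_sub (k v : Zd d) : emb (k - v) = emb k - emb v := by
  funext i; simp only [emb, Pi.sub_apply, Int.cast_sub]

-- jb lemmas
lemma jb_pos (x : ℝ) : 0 < jb x := Real.sqrt_pos.2 (by positivity)

lemma one_le_jb (x : ℝ) : 1 ≤ jb x := by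
  rw [show (1:ℝ) = Real.sqrt 1 from Real.sqrt_one.symm]
  exact Real.sqrt_le_sqrt (by nlinarith [sq_nonneg x])

lemma jb_mono {x y : ℝ} (hx : 0 ≤ x) (h : x ≤ y) : jb x ≤ jb y :=
  Real.sqrt_le_sqrt (by nlinarith)

lemma jb_le_mul {b c : ℝ} (hb : 0 ≤ b) (hc : 0 ≤ c) :
    jb b ≤ jb c * (1 + |b - c|) := by
  set t := |b - c| with ht
  have ht0 : 0 ≤ t := abs_nonneg _
  have hbc : b ≤ c + t := by
    have := le_abs_self (b - c); linarith
  have h1 : 1 + b ^ 2 ≤ (1 + c ^ 2) * (1 + t) ^ 2 := by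
    nlinarith [mul_le_mul hbc hbc hb (by linarith : (0:ℝ) ≤ c + t),
      mul_nonneg ht0 (sq_nonneg (2 * c - 1)), sq_nonneg (c * t)]
  calc jb b ≤ Real.sqrt ((1 + c ^ 2) * (1 + t) ^ 2) := Real.sqrt_le_sqrt h1
    _ = jb c * (1 + t) := by
        rw [Real.sqrt_mul (by positivity), Real.sqrt_sq (by linarith)]
        rfl

lemma jb_peetre {b c T τ : ℝ} (hb : 0 ≤ b) (hc : 0 ≤ c) (hT : 0 ≤ T)
    (h : |b - c| ≤ T) : jb b ^ τ ≤ (1 + T) ^ |τ| * jb c ^ τ := by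
  have h1T : (0:ℝ) < 1 + T := by linarith
  have hb1 : jb b ≤ jb c * (1 + T) := by
    calc jb b ≤ jb c * (1 + |b - c|) := jb_le_mul hb hc
      _ ≤ jb c * (1 + T) := by
          apply mul_le_mul_of_nonneg_left (by linarith) (jb_pos c).le
  have hc1 : jb c ≤ jb b * (1 + T) := by
    calc jb c ≤ jb b * (1 + |c - b|) := jb_le_mul hc hb
      _ ≤ jb b * (1 + T) := by
          apply mul_le_mul_of_nonneg_left _ (jb_pos b).le
          rw [abs_sub_comm] at h; linarith
  rcases le_or_gt 0 τ with hτ | hτ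
  · rw [abs_of_nonneg hτ]
    calc jb b ^ τ ≤ (jb c * (1 + T)) ^ τ :=
          Real.rpow_le_rpow (jb_pos b).le hb1 hτ
      _ = jb c ^ τ * (1 + T) ^ τ := Real.mul_rpow (jb_pos c).le h1T.le
      _ = (1 + T) ^ τ * jb c ^ τ := mul_comm _ _
  · rw [abs_of_neg hτ]
    have h2 : (jb b * (1 + T)) ^ τ ≤ jb c ^ τ :=
      Real.rpow_le_rpow_of_nonpos (jb_pos c) hc1 hτ.le
    have h3 : (jb b * (1 + T)) ^ τ = jb b ^ τ * (1 + T) ^ τ :=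
      Real.mul_rpow (jb_pos b).le h1T.le
    have h4 : (0:ℝ) < (1 + T) ^ τ := Real.rpow_pos_of_pos h1T τ
    have h5 : jb b ^ τ * (1 + T) ^ τ ≤ jb c ^ τ := h3 ▸ h2
    have h6 : jb b ^ τ ≤ jb c ^ τ / (1 + T) ^ τ := (le_div_iff₀ h4).2 h5
    rw [div_eq_mul_inv, ← Real.rpow_neg h1T.le] at h6
    rw [mul_comm]
    exact h6

lemma jb_double {a : ℝ} (ha : 0 ≤ a) : jb (2 * a) ≤ 2 * jb a := by
  have : (2 : ℝ) * jb a = Real.sqrt (4 * (1 + a ^ 2)) := by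
    rw [show (4:ℝ) = 2^2 by norm_num, Real.sqrt_mul (by positivity), Real.sqrt_sq (by norm_num)]
    rfl
  rw [this]
  exact Real.sqrt_le_sqrt (by nlinarith)

lemma jb_double_rpow {a S τ : ℝ} (ha : 0 ≤ a) (h1 : a ≤ S) (h2 : S ≤ 2 * a) :
    jb a ^ τ ≤ 2 ^ |τ| * jb S ^ τ := by
  rcases le_or_gt 0 τ with hτ | hτ
  · rw [abs_of_nonneg hτ]
    calc jb a ^ τ ≤ jb S ^ τ :=
          Real.rpow_le_rpow (jb_pos a).le (jb_mono ha h1) hτ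
      _ ≤ 2 ^ τ * jb S ^ τ := by
          nlinarith [Real.one_le_rpow (by norm_num : (1:ℝ) ≤ 2) hτ,
            Real.rpow_pos_of_pos (jb_pos S) τ]
  · rw [abs_of_neg hτ]
    have hS0 : 0 ≤ S := le_trans ha h1
    have hSa : jb S ≤ 2 * jb a := le_trans (jb_mono hS0 h2) (jb_double ha)
    have h3 : (2 * jb a) ^ τ ≤ jb S ^ τ :=
      Real.rpow_le_rpow_of_nonpos (jb_pos S) hSa hτ.le
    have h4 : (2 * jb a) ^ τ = 2 ^ τ * jb a ^ τ :=
      Real.mul_rpow (by norm_num) (jb_pos a).le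
    have h5 : (0:ℝ) < 2 ^ τ := Real.rpow_pos_of_pos (by norm_num) τ
    rw [h4, mul_comm] at h3
    have h6 : jb a ^ τ ≤ jb S ^ τ / 2 ^ τ := (le_div_iff₀ h5).2 h3
    rw [div_eq_mul_inv, ← Real.rpow_neg (by norm_num : (0:ℝ) ≤ 2)] at h6
    rw [mul_comm]
    exact h6

-- znorm triangle facts
lemma znorm_nonneg (k : Zd d) : 0 ≤ znorm k := Real.sqrt_nonneg _

lemma znorm_add_le (k l : Zd d) : znorm (k + l) ≤ znorm k + znorm l := by
  rw [znorm_eq, znorm_eq, znorm_eq, emb_add]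
  exact rnorm_add_le _ _

end Stmt16Aux

/-- if `Φ ∈ C^∞(ℝ^d × ℝ^d; ℂ)` satisfies the symbol estimates
`|∂_x^α ∂_y^β Φ(x,y)| ≤ C_{α,β} ⟨|x|+|y|⟩^{ω−|α|−|β|}`, then the tensor
`Θ_Φ(j,k,ℓ) = Φ(k,ℓ) 1_{j=k+ℓ}` belongs to `BT^{ω+2N, N}(ℤ^d)` for every `N ∈ ℕ`. -/
theorem stmt_16 {d : ℕ} (hd : 1 ≤ d) (ω : ℝ)
    (Φ : (Fin d → ℝ) × (Fin d → ℝ) → ℂ) (hΦ : ContDiff ℝ (⊤ : ℕ∞) Φ)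
    (hbd : ∀ α β : Fin d → ℕ, ∃ C : ℝ, 0 < C ∧ ∀ x y : Fin d → ℝ,
      ‖pdx α (pdy β Φ) (x, y)‖ ≤
        C * jb (rnorm x + rnorm y) ^ (ω - (∑ m, (α m : ℝ)) - (∑ m, (β m : ℝ)))) :
    ∀ N : ℕ, BT (ω + 2 * N) N (fun j k l : Zd d =>
      if j = k + l then Φ (fun i => (k i : ℝ), fun i => (l i : ℝ)) else 0) := by
  classical
  open Stmt16Aux in
  intro N α β
  obtain ⟨C, hC, hCb⟩ := hbd (fun m => (α m).natAbs) (fun m => (β m).natAbs)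
  have hsumα : (∑ m, (((α m).natAbs : ℕ) : ℝ)) = l1norm α := by
    unfold l1norm
    apply Finset.sum_congr rfl
    intro m _
    rw [Nat.cast_natAbs, Int.cast_abs]
  have hsumβ : (∑ m, (((β m).natAbs : ℕ) : ℝ)) = l1norm β := by
    unfold l1norm
    apply Finset.sum_congr rfl
    intro m _
    rw [Nat.cast_natAbs, Int.cast_abs]
  set L : List (ℝ × EE d) := L2 α ++ L3 β with hL
  set T : ℝ := (L.length : ℝ) with hT
  have hT0 : 0 ≤ T := Nat.cast_nonneg _
  set nR : ℝ := l1norm α + l1norm β with hnR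
  set TP : ℝ := 2 * Real.sqrt d * T with hTP
  have hTP0 : 0 ≤ TP := by positivity
  set τ : ℝ := ω + 2 * N - nR with hτdef
  set K1 : ℝ := (1 + TP) ^ |ω - nR| with hK1
  set K2 : ℝ := (2 : ℝ) ^ |τ| with hK2
  have hK1pos : 0 < K1 := Real.rpow_pos_of_pos (by linarith) _
  have hK2pos : 0 < K2 := Real.rpow_pos_of_pos (by norm_num) _
  refine ⟨C * K1 * K2, by positivity, ?_⟩
  intro j k l
  have hlift : Delta2 α (Delta3 β (fun j k l : Zd d =>
        if j = k + l then Φ (fun i => (k i : ℝ), fun i => (l i : ℝ)) else 0))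
      = Stmt16Aux.lift (DifL L Φ) := by
    show Delta2 α (Delta3 β (Stmt16Aux.lift Φ)) = _
    rw [Delta3_lift, Delta2_lift, hL, DifL_append]
  rw [hlift]
  have hRHSpos : 0 ≤ C * K1 * K2 * jb (znorm j + znorm k + znorm l) ^ (ω + 2 * (N:ℝ) - l1norm α - l1norm β) *
      jb (znorm (j - k) + znorm (j - l)) ^ (-(2 * (N : ℝ))) := by
    apply mul_nonneg (mul_nonneg (by positivity) _) _
    · exact (Real.rpow_pos_of_pos (jb_pos _) _).le
    · exact (Real.rpow_pos_of_pos (jb_pos _) _).le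
  by_cases hj : j = k + l
  · rw [show Stmt16Aux.lift (DifL L Φ) j k l = DifL L Φ (emb k, emb l) from if_pos hj]
    have ha0 : 0 ≤ znorm k + znorm l := by
      have := znorm_nonneg k; have := znorm_nonneg l; linarith
    have hM0 : 0 ≤ C * (K1 * jb (znorm k + znorm l) ^ (ω - nR)) := by
      apply mul_nonneg hC.le (mul_nonneg hK1pos.le
        (Real.rpow_pos_of_pos (jb_pos _) _).le)
    have hmain : ‖DifL L Φ (emb k, emb l)‖ ≤
        C * (K1 * jb (znorm k + znorm l) ^ (ω - nR)) := by
      rw [← DifL_reverse]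
      apply main_claim L.reverse ?memcond Φ hΦ _ _ hM0
      case memcond =>
        intro a ha
        rw [List.mem_reverse, hL, List.mem_append] at ha
        rcases ha with ha | ha
        · exact mem_L2 α ha
        · exact mem_L3 β ha
      intro q hq
      rw [List.reverse_reverse]
      have hder : DerL L Φ q = pdx (fun m => (α m).natAbs) (pdy (fun m => (β m).natAbs) Φ) q := by
        rw [hL, DerL_append, DerL_L3, DerL_L2]
      rw [hder]
      have hq' : ‖q - (emb k, emb l)‖ ≤ T := by
        rwa [List.length_reverse] at hq
      have h1 := hCb q.1 q.2
      have e1 : |rnorm q.1 - znorm k| ≤ Real.sqrt d * T := by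
        rw [znorm_eq]
        refine le_trans (abs_rnorm_sub q.1 (emb k)) ?_
        refine le_trans (rnorm_le_sqrtd_norm _) ?_
        apply mul_le_mul_of_nonneg_left ?_ (Real.sqrt_nonneg (d:ℝ))
        calc ‖q.1 - emb k‖ = ‖(q - (emb k, emb l)).1‖ := rfl
          _ ≤ ‖q - (emb k, emb l)‖ := norm_fst_le _
          _ ≤ T := hq'
      have e2 : |rnorm q.2 - znorm l| ≤ Real.sqrt d * T := by
        rw [znorm_eq]
        refine le_trans (abs_rnorm_sub q.2 (emb l)) ?_
        refine le_trans (rnorm_le_sqrtd_norm _) ?_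
        apply mul_le_mul_of_nonneg_left ?_ (Real.sqrt_nonneg (d:ℝ))
        calc ‖q.2 - emb l‖ = ‖(q - (emb k, emb l)).2‖ := rfl
          _ ≤ ‖q - (emb k, emb l)‖ := norm_snd_le _
          _ ≤ T := hq'
      have ediff : |(rnorm q.1 + rnorm q.2) - (znorm k + znorm l)| ≤ TP := by
        have : (rnorm q.1 + rnorm q.2) - (znorm k + znorm l)
            = (rnorm q.1 - znorm k) + (rnorm q.2 - znorm l) := by ring
        rw [this, hTP]
        calc |(rnorm q.1 - znorm k) + (rnorm q.2 - znorm l)|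
            ≤ |rnorm q.1 - znorm k| + |rnorm q.2 - znorm l| := abs_add_le _ _
          _ ≤ Real.sqrt d * T + Real.sqrt d * T := add_le_add e1 e2
          _ = 2 * Real.sqrt d * T := by ring
      have hpeetre := jb_peetre (add_nonneg (rnorm_nonneg _) (rnorm_nonneg _) : (0:ℝ) ≤ rnorm q.1 + rnorm q.2)
        ha0 hTP0 ediff (τ := ω - nR)
      calc ‖pdx (fun m => (α m).natAbs) (pdy (fun m => (β m).natAbs) Φ) q‖
          = ‖pdx (fun m => (α m).natAbs) (pdy (fun m => (β m).natAbs) Φ) (q.1, q.2)‖ := by rfl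
        _ ≤ C * jb (rnorm q.1 + rnorm q.2) ^ (ω - (∑ m, (((α m).natAbs : ℕ) : ℝ))
              - (∑ m, (((β m).natAbs : ℕ) : ℝ))) := h1
        _ = C * jb (rnorm q.1 + rnorm q.2) ^ (ω - nR) := by
              rw [hsumα, hsumβ, hnR, sub_sub]
        _ ≤ C * (K1 * jb (znorm k + znorm l) ^ (ω - nR)) := by
              apply mul_le_mul_of_nonneg_left _ hC.le
              rw [hK1]
              exact hpeetre
    refine le_trans hmain ?_
    -- now the pure jb manipulation
    have hjk : j - k = l := by rw [hj, add_sub_cancel_left]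
    have hjl : j - l = k := by rw [hj, add_sub_cancel_right]
    have hsplit : jb (znorm k + znorm l) ^ (ω - nR)
        = jb (znorm k + znorm l) ^ τ * jb (znorm k + znorm l) ^ (-(2 * (N:ℝ))) := by
      rw [← Real.rpow_add (jb_pos _), hτdef]
      ring_nf
    have hjle : znorm j ≤ znorm k + znorm l := by
      rw [hj]; exact znorm_add_le k l
    have hdouble : jb (znorm k + znorm l) ^ τ
        ≤ K2 * jb (znorm j + (znorm k + znorm l)) ^ τ := by
      apply jb_double_rpow ha0
      · have := znorm_nonneg j; linarith
      · linarith
    calc C * (K1 * jb (znorm k + znorm l) ^ (ω - nR))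
        = C * K1 * (jb (znorm k + znorm l) ^ τ * jb (znorm k + znorm l) ^ (-(2 * (N:ℝ)))) := by
          rw [hsplit]; ring
      _ ≤ C * K1 * ((K2 * jb (znorm j + (znorm k + znorm l)) ^ τ)
            * jb (znorm k + znorm l) ^ (-(2 * (N:ℝ)))) := by
          apply mul_le_mul_of_nonneg_left _ (mul_nonneg hC.le hK1pos.le)
          apply mul_le_mul_of_nonneg_right hdouble
            (Real.rpow_pos_of_pos (jb_pos _) _).le
      _ = C * K1 * K2 * jb (znorm j + znorm k + znorm l) ^ (ω + 2 * (N:ℝ) - l1norm α - l1norm β)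
            * jb (znorm (j - k) + znorm (j - l)) ^ (-(2 * (N : ℝ))) := by
          rw [hjk, hjl, add_assoc (znorm j), show znorm l + znorm k = znorm k + znorm l from add_comm _ _,
            show ω + 2 * (N:ℝ) - l1norm α - l1norm β = τ by rw [hτdef, hnR]; ring]
          ring
  · rw [show Stmt16Aux.lift (DifL L Φ) j k l = 0 from if_neg hj]
    simpa using hRHSpos
end
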